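/- arXiv:1410.1776 — 3 statements merged into one kernel-verified Lean document; each statement's English description precedes it below -/
import Mathlib

section
/- If a logic program P is stratified with respect to a stratification function σ : B_P → ℕ, then the perfect model Perf(P) = ⋃_{n∈ℕ} M_n, where M_0 is the least model of the stratum-0 rules and M_{n+1} is the least model of stratum-(n+1) rules containing M_n, is a model of P. -/
inductive Lit (α : Type*) : Type _
  | pos (a : α) : Lit α
  | neg (a : α) : Lit α

/-- The stratum of a literal: σ(A) for a positive atom, σ(A)+1 for a negated atom. -/
def litStratum {α : Type*} (σ : α → ℕ) : Lit α → ℕ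
  | .pos a => σ a
  | .neg a => σ a + 1

/-- Truth of a ground literal in a Herbrand interpretation. -/
def litTrue {α : Type*} (I : Set α) : Lit α → Prop
  | .pos a => a ∈ I
  | .neg a => a ∉ I

/-- A ground rule is true in `I` if its head is true in `I` or some body literal is false in `I`. -/
def ruleTrue {α : Type*} (I : Set α) (r : α × List (Lit α)) : Prop :=
  r.1 ∈ I ∨ ∃ l ∈ r.2, ¬ litTrue I l

/-- `I` is a model of `P` if every (ground) rule of `P` is true in `I`. -/
def IsModel {α : Type*} (P : Set (α × List (Lit α))) (I : Set α) : Prop :=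
  ∀ r ∈ P, ruleTrue I r

/-- `P` is stratified w.r.t. `σ` if for every rule the stratum of the head is
at least the stratum of each body literal. -/
def Stratified {α : Type*} (σ : α → ℕ) (P : Set (α × List (Lit α))) : Prop :=
  ∀ r ∈ P, ∀ l ∈ r.2, litStratum σ l ≤ σ r.1

/-- `S_n`: the rules of `P` whose head has stratum `n`. -/
def stratum {α : Type*} (σ : α → ℕ) (P : Set (α × List (Lit α))) (n : ℕ) :
    Set (α × List (Lit α)) :=
  {r ∈ P | σ r.1 = n}

/-- `M` is the least model of `S` containing `X`. -/
def LeastModelContaining {α : Type*} (S : Set (α × List (Lit α))) (X M : Set α) : Prop :=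
  IsModel S M ∧ X ⊆ M ∧ ∀ M', IsModel S M' → X ⊆ M' → M ⊆ M'

/-!
The iterates `M n` increase, and `M (n + 1)` only adds atoms of stratum `n + 1` to `M n`: the
union of `M n` with all atoms of stratum `n + 1` is already a model of the stratum-`(n + 1)`
rules. Hence an atom `a` of the union lies in `M (σ a)`, so a literal of stratum at most `n` has
the same truth value in the union as in `M n`. A rule whose head has stratum `n` is true in `M n`,
and by stratification all its body literals have stratum at most `n`, so it stays true in the
union.
-/

theorem isModel_of_forall_head_mem {α : Type*} {S : Set (α × List (Lit α))} {I : Set α}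
    (h : ∀ r ∈ S, r.1 ∈ I) : IsModel S I :=
  fun r hr => Or.inl (h r hr)

theorem LeastModelContaining.subset_union {α : Type*} {S : Set (α × List (Lit α))}
    {X M T : Set α} (hM : LeastModelContaining S X M) (hT : ∀ r ∈ S, r.1 ∈ T) :
    M ⊆ X ∪ T :=
  hM.2.2 _ (isModel_of_forall_head_mem fun r hr => Or.inr (hT r hr)) Set.subset_union_left

section Iterates

variable {α : Type*} {σ : α → ℕ} {P : Set (α × List (Lit α))} {M : ℕ → Set α}

theorem isModel_stratum_of_iterates
    (h0 : LeastModelContaining (stratum σ P 0) ∅ (M 0))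
    (hs : ∀ n, LeastModelContaining (stratum σ P (n + 1)) (M n) (M (n + 1))) (n : ℕ) :
    IsModel (stratum σ P n) (M n) := by
  cases n with
  | zero => exact h0.1
  | succ k => exact (hs k).1

theorem mem_iterate_stratum_of_mem
    (h0 : LeastModelContaining (stratum σ P 0) ∅ (M 0))
    (hs : ∀ n, LeastModelContaining (stratum σ P (n + 1)) (M n) (M (n + 1)))
    {a : α} {m : ℕ} (ha : a ∈ M m) : a ∈ M (σ a) := by
  induction m with
  | zero =>
    have hσ : σ a = 0 := by
      simpa using h0.subset_union (T := {a | σ a = 0}) (fun r hr => hr.2) ha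
    rwa [hσ]
  | succ k ih =>
    rcases (hs k).subset_union (T := {a | σ a = k + 1}) (fun r hr => hr.2) ha with hk | hσ
    · exact ih hk
    · rwa [show σ a = k + 1 from hσ]

theorem litTrue_iUnion_iff
    (h0 : LeastModelContaining (stratum σ P 0) ∅ (M 0))
    (hs : ∀ n, LeastModelContaining (stratum σ P (n + 1)) (M n) (M (n + 1)))
    {n : ℕ} {l : Lit α} (hl : litStratum σ l ≤ n) :
    litTrue (⋃ m, M m) l ↔ litTrue (M n) l := by
  have hmono : Monotone M := monotone_nat_of_le_succ fun k => (hs k).2.1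
  have hmem : ∀ a, σ a ≤ n → (a ∈ ⋃ m, M m ↔ a ∈ M n) := by
    intro a ha
    refine ⟨fun h => ?_, fun h => Set.mem_iUnion.mpr ⟨n, h⟩⟩
    obtain ⟨m, hm⟩ := Set.mem_iUnion.mp h
    exact hmono ha (mem_iterate_stratum_of_mem h0 hs hm)
  cases l with
  | pos a => exact hmem a hl
  | neg a => exact not_congr (hmem a (Nat.le_of_succ_le hl))

end Iterates

/-- If `P` is stratified w.r.t. `σ : B_P → ℕ`, then the perfect model
`Perf(P) = ⋃_n M_n` — where `M_0` is the least model of the stratum-0 rules and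
`M_{n+1}` is the least model of the stratum-(n+1) rules containing `M_n` —
is a model of `P`. -/
theorem stmt1 {α : Type*} (σ : α → ℕ) (P : Set (α × List (Lit α)))
    (hstr : Stratified σ P) (M : ℕ → Set α)
    (h0 : LeastModelContaining (stratum σ P 0) ∅ (M 0))
    (hs : ∀ n, LeastModelContaining (stratum σ P (n + 1)) (M n) (M (n + 1))) :
    IsModel P (⋃ n, M n) := by
  intro r hr
  rcases isModel_stratum_of_iterates h0 hs (σ r.1) r ⟨hr, rfl⟩ with hhead | ⟨l, hl, hfalse⟩
  · exact Or.inl (Set.mem_iUnion.mpr ⟨σ r.1, hhead⟩)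
  · exact Or.inr ⟨l, hl, (litTrue_iUnion_iff h0 hs (hstr r hr l hl)).not.mpr hfalse⟩
end

section
/- The rule-based definition of EG is correct for finite state spaces: in a finite transition system, EG(φ) holds in s0 (defined as the least relation closed under the three rules: (i) fpath(φ,s0,s0) implies EG(φ,s0); (ii) φ holds in s0 and r(s0,s1) and EG(φ,s1) implies EG(φ,s0); (iii) s0 is a sink and φ holds in s0 implies EG(φ,s0)) if and only if there exists a maximal path starting at s0 along which φ holds in every state. -/
/-!
A φ-cycle `fpath(φ,s,s)` unrolls to an infinite φ-path, and rule (ii) prepends a state to a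
maximal path; a sink gives a path of length zero. Conversely, a finite maximal path is walked
back from its sink by rule (ii). An infinite path in a finite state space revisits some state,
so the segment between the two visits is a φ-cycle; rule (i) applies there and rule (ii)
walks back to the start.
-/

/-- `fpath(φ,x,y)`: least relation with: `φ` holds in `x` and `r x y` implies `fpath(φ,x,y)`;
and `φ` holds in `x`, `r x z` and `fpath(φ,z,y)` implies `fpath(φ,x,y)`. -/
inductive FPath {S : Type*} (r : S → S → Prop) (φ : S → Prop) : S → S → Prop
  | base {x y : S} : φ x → r x y → FPath r φ x y
  | step {x z y : S} : φ x → r x z → FPath r φ z y → FPath r φ x y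

/-- A sink is a state with no `r`-successor. -/
def Sink {S : Type*} (r : S → S → Prop) (s : S) : Prop := ∀ s', ¬ r s s'

/-- The rule-based definition of EG: the least relation closed under
(i) a nontrivial φ-cycle through `s` implies `EG(φ,s)`;
(ii) `φ` holds in `s`, `r s s'` and `EG(φ,s')` implies `EG(φ,s)`;
(iii) `s` is a sink and `φ` holds in `s` implies `EG(φ,s)`. -/
inductive EG {S : Type*} (r : S → S → Prop) (φ : S → Prop) : S → Prop
  | cyc {s : S} : FPath r φ s s → EG r φ s
  | step {s s' : S} : φ s → r s s' → EG r φ s' → EG r φ s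
  | sink {s : S} : Sink r s → φ s → EG r φ s

/-- The maximal-path semantics of EG: there exists a maximal path starting at `s0`
(either an infinite `r`-path, or a finite `r`-path ending in a sink) along which `φ`
holds in every state. -/
def EGPath {S : Type*} (r : S → S → Prop) (φ : S → Prop) (s0 : S) : Prop :=
  (∃ f : ℕ → S, f 0 = s0 ∧ (∀ i, r (f i) (f (i + 1))) ∧ ∀ i, φ (f i)) ∨
  (∃ (k : ℕ) (f : ℕ → S), f 0 = s0 ∧ (∀ i < k, r (f i) (f (i + 1))) ∧
      Sink r (f k) ∧ ∀ i ≤ k, φ (f i))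

section

variable {S : Type*} {r : S → S → Prop} {φ : S → Prop}

theorem exists_path_of_forall_exists_rel {P : S → Prop} (h : ∀ x, P x → ∃ y, r x y ∧ P y)
    {x : S} (hx : P x) : ∃ f : ℕ → S, f 0 = x ∧ (∀ i, r (f i) (f (i + 1))) ∧ ∀ i, P (f i) := by
  choose g hg using fun y : {y // P y} => h y y.2
  let next : {y // P y} → {y // P y} := fun y => ⟨g y, (hg y).2⟩
  refine ⟨fun i => (next^[i] ⟨x, hx⟩).1, rfl, fun i => ?_, fun i => (next^[i] ⟨x, hx⟩).2⟩
  simpa only [Function.iterate_succ_apply'] using (hg _).1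

theorem FPath.head {x y : S} (h : FPath r φ x y) : φ x := by
  cases h <;> assumption

theorem egPath_of_fPath_self {x : S} (h : FPath r φ x x) : EGPath r φ x := by
  -- the states from which the cycle leads back to `x` have a successor among themselves
  have closed : ∀ y, FPath r φ y x → ∃ z, r y z ∧ FPath r φ z x := by
    rintro y (⟨-, hyx⟩ | ⟨-, hyz, hzx⟩)
    exacts [⟨x, hyx, h⟩, ⟨_, hyz, hzx⟩]
  obtain ⟨f, hf0, hr, hf⟩ := exists_path_of_forall_exists_rel closed h
  exact Or.inl ⟨f, hf0, hr, fun i => (hf i).head⟩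

theorem EGPath.cons {s s' : S} (h : EGPath r φ s') (hφ : φ s) (hr : r s s') :
    EGPath r φ s := by
  rcases h with ⟨f, rfl, hf, hfφ⟩ | ⟨k, f, rfl, hf, hk, hfφ⟩
  · refine Or.inl ⟨fun | 0 => s | i + 1 => f i, rfl, ?_, ?_⟩
    · rintro (_ | i)
      exacts [hr, hf i]
    · rintro (_ | i)
      exacts [hφ, hfφ i]
  · refine Or.inr ⟨k + 1, fun | 0 => s | i + 1 => f i, rfl, ?_, hk, ?_⟩
    · rintro (_ | i) hi
      exacts [hr, hf i (by omega)]
    · rintro (_ | i) hi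
      exacts [hφ, hfφ i (by omega)]

theorem FPath.of_path {n : ℕ} {f : ℕ → S} (hφ : ∀ i ≤ n, φ (f i))
    (hr : ∀ i ≤ n, r (f i) (f (i + 1))) : FPath r φ (f 0) (f (n + 1)) := by
  induction n generalizing f with
  | zero => exact .base (hφ 0 le_rfl) (hr 0 le_rfl)
  | succ n ih =>
    exact .step (hφ 0 (by omega)) (hr 0 (by omega))
      (ih (f := fun i => f (i + 1)) (fun i hi => hφ _ (by omega)) (fun i hi => hr _ (by omega)))

theorem EG.of_path {n : ℕ} {f : ℕ → S} (hφ : ∀ i < n, φ (f i))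
    (hr : ∀ i < n, r (f i) (f (i + 1))) (h : EG r φ (f n)) : EG r φ (f 0) := by
  induction n generalizing f with
  | zero => exact h
  | succ n ih =>
    exact .step (hφ 0 (by omega)) (hr 0 (by omega))
      (ih (f := fun i => f (i + 1)) (fun i hi => hφ _ (by omega)) (fun i hi => hr _ (by omega)) h)

theorem EG.of_infinite_path [Finite S] {f : ℕ → S} (hr : ∀ i, r (f i) (f (i + 1)))
    (hφ : ∀ i, φ (f i)) : EG r φ (f 0) := by
  obtain ⟨i, j, hij, hfij⟩ : ∃ i j, i < j ∧ f i = f j := by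
    obtain ⟨i, j, hne, heq⟩ := Finite.exists_ne_map_eq_of_infinite f
    rcases hne.lt_or_gt with h | h
    exacts [⟨i, j, h, heq⟩, ⟨j, i, h, heq.symm⟩]
  have hcyc : FPath r φ (f i) (f i) := by
    have := FPath.of_path (n := j - i - 1) (f := fun k => f (i + k))
      (fun k _ => hφ _) (fun k _ => hr _)
    rwa [add_zero, show i + (j - i - 1 + 1) = j by omega, ← hfij] at this
  exact EG.of_path (fun k _ => hφ k) (fun k _ => hr k) (.cyc hcyc)

end

/-- Correctness of the rule-based definition of EG for finite state spaces:
in a finite transition system, `EG(φ)` holds in `s0` (least-relation definition) iff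
there exists a maximal path starting at `s0` along which `φ` holds in every state. -/
theorem stmt8 {S : Type*} [Finite S] (r : S → S → Prop) (φ : S → Prop) (s0 : S) :
    EG r φ s0 ↔ EGPath r φ s0 := by
  constructor
  · intro h
    induction h with
    | cyc h => exact egPath_of_fPath_self h
    | step hφ hr _ ih => exact ih.cons hφ hr
    | @sink s hs hφ => exact Or.inr ⟨0, fun _ => s, rfl, by simp, hs, fun _ _ => hφ⟩
  · rintro (⟨f, rfl, hr, hφ⟩ | ⟨k, f, rfl, hr, hs, hφ⟩)
    · exact EG.of_infinite_path hr hφ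
    · exact EG.of_path (fun i hi => hφ i hi.le) hr (.sink hs (hφ k le_rfl))
end

section
/- In a finite transition system, if φ holds along an infinite path starting at s0, then there exists a state s on that path, reachable from s0 through states satisfying φ, such that fpath(φ,s,s) holds (i.e., there is a nontrivial φ-cycle through s); consequently EG(φ,s0) holds in the rule-based semantics. -/
section

variable {S : Type*} {r : S → S → Prop} {φ : S → Prop}

theorem FPath.tail {x y z : S} (h : FPath r φ x y) (hy : φ y) (hyz : r y z) :
    FPath r φ x z := by
  induction h with
  | base hx hxy => exact .step hx hxy (.base hy hyz)
  | step hx hxw _ ih => exact .step hx hxw (ih hy hyz)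

variable {f : ℕ → S} (hstep : ∀ i, r (f i) (f (i + 1))) (hφ : ∀ i, φ (f i))
include hstep hφ

theorem fpath_of_path_of_lt {i j : ℕ} (hij : i < j) : FPath r φ (f i) (f j) := by
  induction j, hij using Nat.le_induction with
  | base => exact .base (hφ i) (hstep i)
  | succ j _ ih => exact ih.tail (hφ j) (hstep j)

theorem exists_fpath_cycle_of_path [Finite S] : ∃ i, FPath r φ (f i) (f i) := by
  obtain ⟨i, j, hne, heq⟩ := Finite.exists_ne_map_eq_of_infinite f
  rcases hne.lt_or_gt with hij | hji
  · exact ⟨j, by simpa only [heq] using fpath_of_path_of_lt hstep hφ hij⟩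
  · exact ⟨i, by simpa only [heq] using fpath_of_path_of_lt hstep hφ hji⟩

theorem eg_of_path_of_le {k i : ℕ} (hki : k ≤ i) (hi : EG r φ (f i)) : EG r φ (f k) := by
  induction hki using Nat.decreasingInduction with
  | self => exact hi
  | of_succ k _ ih => exact .step (hφ k) (hstep k) ih

end

/-- In a finite transition system, if `φ` holds along an infinite path starting at `s0`,
then there exists a state on that path (reachable from `s0` through states satisfying `φ`)
through which there is a nontrivial φ-cycle, i.e. `fpath(φ,s,s)` holds;
consequently `EG(φ,s0)` holds in the rule-based semantics. -/
theorem stmt9 {S : Type*} [Finite S] (r : S → S → Prop) (φ : S → Prop) (s0 : S)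
    (f : ℕ → S) (h0 : f 0 = s0) (hstep : ∀ i, r (f i) (f (i + 1)))
    (hφ : ∀ i, φ (f i)) :
    (∃ i, FPath r φ (f i) (f i)) ∧ EG r φ s0 := by
  obtain ⟨i, hcyc⟩ := exists_fpath_cycle_of_path hstep hφ
  exact ⟨⟨i, hcyc⟩, h0 ▸ eg_of_path_of_le hstep hφ (Nat.zero_le i) (.cyc hcyc)⟩
end
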